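/- Let ε = ±1, τ_g = 0, and suppose ε k_n² − k_g² > 0 with θ = √(ε k_n² − k_g²). Let A = ![![0, k_g, -ε k_n], ![k_g, 0, 0], ![k_n, 0, 0]]. Then the (1,1) entry of ∫₀^ω (exp(sA) − I) ds equals (k_g² − ε k_n²)·(θω − sin(θω))/θ³, and ω + ∫₀^ω (exp(sA) − I)₁₁ ds = sin(θω)/θ. -/

import Mathlib

open Matrix NormedSpace

/-!
Since `A³ = -θ² A`, the function `s ↦ I + (sin θs / θ) A + ((1 - cos θs) / θ²) A²` solves
`B' = A B`, `B 0 = I`, so it is `exp (s A)`. As `A₁₁ = 0` and `(A²)₁₁ = k_g² - ε k_n² = -θ²`,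
the `(1,1)` entry of `exp (s A) - I` is `cos θs - 1`, whose integral is `sin θω / θ - ω`.
-/

section ExpSmul

variable {𝔸 : Type*} [NormedRing 𝔸] [NormedAlgebra ℝ 𝔸] [CompleteSpace 𝔸]

theorem eq_exp_smul_of_hasDerivAt {M : 𝔸} {B : ℝ → 𝔸} (hB : ∀ u, HasDerivAt B (M * B u) u)
    (hB₀ : B 0 = 1) (s : ℝ) : B s = exp (s • M) := by
  have hderiv : ∀ u, HasDerivAt (fun u ↦ exp ((-u) • M) * B u) 0 u := by
    intro u
    have hE : HasDerivAt (fun u : ℝ ↦ exp ((-u) • M)) (-(exp ((-u) • M) * M)) u :=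
      ((hasDerivAt_exp_smul_const M (-u)).scomp u (hasDerivAt_neg u)).congr_deriv (by simp)
    exact (hE.mul (hB u)).congr_deriv (by simp [mul_assoc])
  have hconst : exp ((-s) • M) * B s = 1 := by
    simpa [hB₀] using is_const_of_deriv_eq_zero (fun u ↦ (hderiv u).differentiableAt)
      (fun u ↦ (hderiv u).deriv) s 0
  have hinv : exp (s • M) * exp ((-s) • M) = 1 := by
    let : NormedAlgebra ℚ 𝔸 := .restrictScalars ℚ ℝ 𝔸
    rw [← NormedSpace.exp_add_of_commute (((Commute.refl M).smul_left s).smul_right (-s))]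
    simp
  calc B s = exp (s • M) * (exp ((-s) • M) * B s) := by rw [← mul_assoc, hinv, one_mul]
    _ = exp (s • M) := by rw [hconst, mul_one]

theorem Real.hasDerivAt_sin_mul_div {θ : ℝ} (hθ : θ ≠ 0) (u : ℝ) :
    HasDerivAt (fun u ↦ Real.sin (θ * u) / θ) (Real.cos (θ * u)) u :=
  (((hasDerivAt_id' u).const_mul θ).sin.div_const θ).congr_deriv (by field_simp)

theorem Real.hasDerivAt_one_sub_cos_mul_div_sq {θ : ℝ} (hθ : θ ≠ 0) (u : ℝ) :
    HasDerivAt (fun u ↦ (1 - Real.cos (θ * u)) / θ ^ 2) (Real.sin (θ * u) / θ) u :=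
  ((((hasDerivAt_id' u).const_mul θ).cos.const_sub 1).div_const (θ ^ 2)).congr_deriv
    (by field_simp)

theorem exp_smul_eq_of_pow_three {M : 𝔸} {θ : ℝ} (hθ : θ ≠ 0) (hM : M ^ 3 = (-θ ^ 2) • M)
    (s : ℝ) :
    exp (s • M) = 1 + (Real.sin (θ * s) / θ) • M + ((1 - Real.cos (θ * s)) / θ ^ 2) • (M * M) := by
  refine (eq_exp_smul_of_hasDerivAt (M := M) (B := fun u ↦ 1 + (Real.sin (θ * u) / θ) • M +
    ((1 - Real.cos (θ * u)) / θ ^ 2) • (M * M)) (fun u ↦ ?_) ?_ s).symm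
  · refine (((hasDerivAt_const u 1).add ((Real.hasDerivAt_sin_mul_div hθ u).smul_const M)).add
      ((Real.hasDerivAt_one_sub_cos_mul_div_sq hθ u).smul_const (M * M))).congr_deriv ?_
    have hcoeff : (1 - Real.cos (θ * u)) / θ ^ 2 * -θ ^ 2 = Real.cos (θ * u) - 1 := by
      field_simp
      ring
    rw [mul_add, mul_add, mul_one, mul_smul_comm, mul_smul_comm, ← pow_three, hM, smul_smul,
      hcoeff]
    module
  · simp

end ExpSmul

theorem intervalIntegral.integral_cos_mul {θ : ℝ} (hθ : θ ≠ 0) (ω : ℝ) :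
    ∫ s in (0 : ℝ)..ω, Real.cos (θ * s) = Real.sin (θ * ω) / θ := by
  simp [hθ, div_eq_inv_mul]

def darbouxMatrix (kg kn ε : ℝ) : Matrix (Fin 3) (Fin 3) ℝ :=
  !![0, kg, -ε * kn; kg, 0, 0; kn, 0, 0]

theorem darbouxMatrix_pow_three (kg kn ε : ℝ) :
    darbouxMatrix kg kn ε ^ 3 = (-(ε * kn ^ 2 - kg ^ 2)) • darbouxMatrix kg kn ε := by
  ext i j
  fin_cases i <;> fin_cases j <;>
    simp [darbouxMatrix, pow_three, mul_apply, Fin.sum_univ_three] <;> ring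

theorem darbouxMatrix_mul_self_zero_zero (kg kn ε : ℝ) :
    (darbouxMatrix kg kn ε * darbouxMatrix kg kn ε) 0 0 = kg ^ 2 - ε * kn ^ 2 := by
  simp [darbouxMatrix, mul_apply, Fin.sum_univ_three]
  ring

section Darboux

attribute [local instance] Matrix.linftyOpNormedRing Matrix.linftyOpNormedAlgebra

theorem exp_smul_darbouxMatrix_zero_zero {kg kn ε θ : ℝ} (hθ : θ ≠ 0)
    (hθsq : θ ^ 2 = ε * kn ^ 2 - kg ^ 2) (s : ℝ) :
    exp (s • darbouxMatrix kg kn ε) 0 0 = Real.cos (θ * s) := by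
  have hcube : darbouxMatrix kg kn ε ^ 3 = (-θ ^ 2) • darbouxMatrix kg kn ε := by
    rw [hθsq]
    exact darbouxMatrix_pow_three kg kn ε
  -- The lemma reaches `Matrix.instRing` through the `L∞`-operator norm, so it is matched up to
  -- defeq by `show` rather than syntactically by `rw`.
  rw [show exp (s • darbouxMatrix kg kn ε) = _ from exp_smul_eq_of_pow_three hθ hcube s]
  have h₀₀ : darbouxMatrix kg kn ε 0 0 = 0 := rfl
  simp only [Matrix.add_apply, Matrix.smul_apply, Matrix.one_apply_eq, smul_eq_mul, h₀₀,
    darbouxMatrix_mul_self_zero_zero, show kg ^ 2 - ε * kn ^ 2 = -θ ^ 2 by linarith]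
  field_simp
  ring

end Darboux

theorem stmt_16_general (kg kn ε : ℝ)
    (hpos : 0 < ε * kn ^ 2 - kg ^ 2)
    (θ : ℝ) (hθ : θ = Real.sqrt (ε * kn ^ 2 - kg ^ 2))
    (A : Matrix (Fin 3) (Fin 3) ℝ)
    (hA : A = !![0, kg, -ε * kn; kg, 0, 0; kn, 0, 0]) (ω : ℝ) :
    (∫ s in (0:ℝ)..ω, (NormedSpace.exp (s • A) - 1) 0 0) =
        (kg ^ 2 - ε * kn ^ 2) * (θ * ω - Real.sin (θ * ω)) / θ ^ 3 ∧
      ω + (∫ s in (0:ℝ)..ω, (NormedSpace.exp (s • A) - 1) 0 0) = Real.sin (θ * ω) / θ := by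
  obtain rfl : A = darbouxMatrix kg kn ε := hA
  have hθ₀ : θ ≠ 0 := (hθ ▸ Real.sqrt_pos.mpr hpos).ne'
  have hθsq : θ ^ 2 = ε * kn ^ 2 - kg ^ 2 := hθ ▸ Real.sq_sqrt hpos.le
  have hint : ∫ s in (0 : ℝ)..ω, (exp (s • darbouxMatrix kg kn ε) - 1) 0 0 =
      Real.sin (θ * ω) / θ - ω := by
    simp only [Matrix.sub_apply, Matrix.one_apply_eq, exp_smul_darbouxMatrix_zero_zero hθ₀ hθsq]
    have hcos : Continuous fun s ↦ Real.cos (θ * s) := by fun_prop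
    rw [intervalIntegral.integral_sub (hcos.intervalIntegrable _ _) intervalIntegrable_const,
      intervalIntegral.integral_cos_mul hθ₀]
    simp
  rw [hint]
  refine ⟨?_, by ring⟩
  rw [show kg ^ 2 - ε * kn ^ 2 = -θ ^ 2 by linarith]
  field_simp
  ring

/-- With `τ_g = 0` and `θ = √(ε k_n² − k_g²) > 0`, for the Darboux matrix `A` one has
`∫₀^ω (exp(sA) − I)₁₁ ds = (k_g² − ε k_n²)(θω − sin θω)/θ³` and
`ω + ∫₀^ω (exp(sA) − I)₁₁ ds = sin(θω)/θ`. -/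
theorem stmt_16 (kg kn ε : ℝ) (hε : ε = 1 ∨ ε = -1)
    (hpos : 0 < ε * kn ^ 2 - kg ^ 2)
    (θ : ℝ) (hθ : θ = Real.sqrt (ε * kn ^ 2 - kg ^ 2))
    (A : Matrix (Fin 3) (Fin 3) ℝ)
    (hA : A = !![0, kg, -ε * kn; kg, 0, 0; kn, 0, 0]) (ω : ℝ) :
    (∫ s in (0:ℝ)..ω, (NormedSpace.exp (s • A) - 1) 0 0) =
        (kg ^ 2 - ε * kn ^ 2) * (θ * ω - Real.sin (θ * ω)) / θ ^ 3 ∧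
      ω + (∫ s in (0:ℝ)..ω, (NormedSpace.exp (s • A) - 1) 0 0) = Real.sin (θ * ω) / θ :=
  stmt_16_general kg kn ε hpos θ hθ A hA ω
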